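/- arXiv:2503.10875 — 2 statements merged into one kernel-verified Lean document; each statement's English description precedes it below -/
import Mathlib

section
/- (Theorem on class separation, part 1.) Let (X̂, 𝒜) be a nonempty measurable space with a σ-finite measure ν. Let q_y, q_{y'}, b : X̂ → ℝ be nonnegative measurable probability densities with respect to ν (each integrating to 1), and let λ : X̂ → ℝ be measurable with 0 ≤ λ(x̂) ≤ 1 for all x̂, with ∫ λ·b dν < 1 and ∫ λ·q_y dν < 1 and ∫ λ·q_{y'} dν < 1. For each class c ∈ {y, y'}, set η_c = (1 - ∫ λ·q_c dν)/(1 - ∫ λ·b dν) and define the mixture density p_c(x̂) = λ(x̂)·q_c(x̂) + η_c·(1-λ(x̂))·b(x̂), and let D_c be the measure with density p_c with respect to ν (a probability measure). Let Q_c be the measure with density q_c with respect to ν. Then d_TV(D_y, D_{y'}) ≥ (inf_{x̂ ∈ X̂} λ(x̂)) · d_TV(Q_y, Q_{y'}). -/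
/-!
Let `h = q_y - q_{y'}` and `P = {h ≥ 0}`. As `∫ h = 0`, every measurable `Γ` satisfies
`|Q_y Γ - Q_{y'} Γ| = |∫_Γ h| ≤ ∫_P h`, so `d_TV(Q_y, Q_{y'}) ≤ ∫_P h`. The density difference
`p_y - p_{y'} = λ h + (η_y - η_{y'}) (1 - λ) b` also integrates to zero, and comparing it with
`(inf λ) h` on `P` or on `Pᶜ`, according to the sign of `η_y - η_{y'}`, gives
`D_y P - D_{y'} P ≥ (inf λ) ∫_P h`.
-/

open MeasureTheory

/-- Total variation distance between two measures:
the supremum over measurable sets of the absolute difference of their masses. -/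
noncomputable def dTV {Ω : Type*} [MeasurableSpace Ω] (D₁ D₂ : Measure Ω) : ℝ :=
  sSup {r | ∃ Γ : Set Ω, MeasurableSet Γ ∧ r = |(D₁ Γ).toReal - (D₂ Γ).toReal|}

open Set

section TotalVariation

variable {Ω : Type*} [MeasurableSpace Ω] {D₁ D₂ : Measure Ω}

lemma dTV_le_of_forall_abs_sub_le {c : ℝ}
    (h : ∀ Γ, MeasurableSet Γ → |(D₁ Γ).toReal - (D₂ Γ).toReal| ≤ c) : dTV D₁ D₂ ≤ c :=
  csSup_le ⟨_, ∅, .empty, rfl⟩ fun _ ⟨Γ, hΓ, hr⟩ => hr ▸ h Γ hΓ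

lemma abs_sub_le_dTV [IsFiniteMeasure D₁] [IsFiniteMeasure D₂] {Γ : Set Ω}
    (hΓ : MeasurableSet Γ) : |(D₁ Γ).toReal - (D₂ Γ).toReal| ≤ dTV D₁ D₂ := by
  refine le_csSup ⟨(D₁ univ).toReal + (D₂ univ).toReal, ?_⟩ ⟨Γ, hΓ, rfl⟩
  rintro _ ⟨Γ', -, rfl⟩
  have h₁ := ENNReal.toReal_mono (measure_ne_top D₁ univ) (measure_mono (subset_univ Γ'))
  have h₂ := ENNReal.toReal_mono (measure_ne_top D₂ univ) (measure_mono (subset_univ Γ'))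
  rw [abs_le]
  constructor <;> linarith [(D₁ Γ').toReal_nonneg, (D₂ Γ').toReal_nonneg]

end TotalVariation

lemma nonneg_of_eq_mixture {X : Type*} {l q b p : X → ℝ} {η : ℝ} (hl_mem : ∀ x, l x ∈ Icc 0 1)
    (hp : ∀ x, p x = l x * q x + η * (1 - l x) * b x) (hq : ∀ x, 0 ≤ q x) (hb : ∀ x, 0 ≤ b x)
    (hη : 0 ≤ η) (x : X) : 0 ≤ p x := by
  rw [hp x]
  exact add_nonneg (mul_nonneg (hl_mem x).1 (hq x))
    (mul_nonneg (mul_nonneg hη (sub_nonneg.2 (hl_mem x).2)) (hb x))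

section Density

variable {X : Type*} [MeasurableSpace X] {ν : Measure X}

lemma toReal_withDensity_ofReal_sub {f₁ f₂ : X → ℝ} (hf₁ : Integrable f₁ ν) (hf₂ : Integrable f₂ ν)
    (hf₁_nonneg : ∀ x, 0 ≤ f₁ x) (hf₂_nonneg : ∀ x, 0 ≤ f₂ x) {s : Set X} (hs : MeasurableSet s) :
    ((ν.withDensity fun x => ENNReal.ofReal (f₁ x)) s).toReal
      - ((ν.withDensity fun x => ENNReal.ofReal (f₂ x)) s).toReal = ∫ x in s, (f₁ x - f₂ x) ∂ν := by
  rw [withDensity_apply _ hs, withDensity_apply _ hs,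
    ← ofReal_integral_eq_lintegral_ofReal hf₁.integrableOn (ae_of_all _ hf₁_nonneg),
    ← ofReal_integral_eq_lintegral_ofReal hf₂.integrableOn (ae_of_all _ hf₂_nonneg),
    ENNReal.toReal_ofReal (setIntegral_nonneg hs fun x _ => hf₁_nonneg x),
    ENNReal.toReal_ofReal (setIntegral_nonneg hs fun x _ => hf₂_nonneg x),
    integral_sub hf₁.integrableOn hf₂.integrableOn]

lemma integrable_of_eq_mixture {l q b p : X → ℝ} {η : ℝ} (hl_mem : ∀ x, l x ∈ Icc 0 1)
    (hp : ∀ x, p x = l x * q x + η * (1 - l x) * b x) (hl : Measurable l) (hq : Integrable q ν)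
    (hb : Integrable b ν) : Integrable p ν := by
  have hl_bound : ∀ x, ‖l x‖ ≤ 1 := fun x => by
    rw [Real.norm_eq_abs, abs_le]; constructor <;> linarith [(hl_mem x).1, (hl_mem x).2]
  have hηl_bound : ∀ x, ‖η * (1 - l x)‖ ≤ |η| := fun x => by
    rw [norm_mul, Real.norm_eq_abs, Real.norm_eq_abs, abs_of_nonneg (sub_nonneg.2 (hl_mem x).2)]
    exact mul_le_of_le_one_right (abs_nonneg η) (by linarith [(hl_mem x).1])
  rw [funext hp]
  exact (hq.bdd_mul hl.aestronglyMeasurable (ae_of_all _ hl_bound)).add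
    (hb.bdd_mul (measurable_const.mul (measurable_const.sub hl)).aestronglyMeasurable
      (ae_of_all _ hηl_bound))

lemma setIntegral_le_setIntegral_of_pos_neg {h : X → ℝ} {P Γ : Set X} (hP : MeasurableSet P)
    (h_pos : ∀ x ∈ P, 0 ≤ h x) (h_neg : ∀ x ∉ P, h x ≤ 0) (hh : Integrable h ν)
    (hΓ : MeasurableSet Γ) : ∫ x in Γ, h x ∂ν ≤ ∫ x in P, h x ∂ν := by
  rw [← integral_inter_add_sdiff hP hh.integrableOn]
  have h_inter : ∫ x in Γ ∩ P, h x ∂ν ≤ ∫ x in P, h x ∂ν :=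
    setIntegral_mono_set hh.integrableOn (ae_restrict_of_forall_mem hP h_pos)
      inter_subset_right.eventuallyLE
  have h_sdiff : ∫ x in Γ \ P, h x ∂ν ≤ 0 :=
    setIntegral_nonpos (hΓ.diff hP) fun x hx => h_neg x hx.2
  linarith

lemma abs_setIntegral_le_setIntegral_of_pos_neg {h : X → ℝ} {P Γ : Set X} (hP : MeasurableSet P)
    (h_pos : ∀ x ∈ P, 0 ≤ h x) (h_neg : ∀ x ∉ P, h x ≤ 0) (hh : Integrable h ν)
    (h_zero : ∫ x, h x ∂ν = 0) (hΓ : MeasurableSet Γ) :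
    |∫ x in Γ, h x ∂ν| ≤ ∫ x in P, h x ∂ν := by
  have h_upper := setIntegral_le_setIntegral_of_pos_neg hP h_pos h_neg hh hΓ
  have h_lower : ∫ x in Γ, -h x ∂ν ≤ ∫ x in Pᶜ, -h x ∂ν :=
    setIntegral_le_setIntegral_of_pos_neg hP.compl (fun x hx => neg_nonneg.2 (h_neg x hx))
      (fun x hx => neg_nonpos.2 (h_pos x (not_not.1 hx))) hh.neg hΓ
  rw [integral_neg, integral_neg, setIntegral_compl hP hh, h_zero] at h_lower
  exact abs_le.2 ⟨by linarith, h_upper⟩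

/-- If `δ ≥ 0` the pointwise bound `m * h ≤ d` holds on `P`; if `δ ≤ 0` the reverse bound holds
on `Pᶜ`, and since `h` and `d` both integrate to zero it transfers back to `P`. -/
lemma mul_setIntegral_le_setIntegral_of_pos_neg {h l g d : X → ℝ} {m δ : ℝ} {P : Set X}
    (hP : MeasurableSet P) (h_pos : ∀ x ∈ P, 0 ≤ h x) (h_neg : ∀ x ∉ P, h x ≤ 0)
    (hm : ∀ x, m ≤ l x) (hg : ∀ x, 0 ≤ g x) (hd : ∀ x, d x = l x * h x + δ * g x)
    (hh : Integrable h ν) (hdi : Integrable d ν)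
    (hh_zero : ∫ x, h x ∂ν = 0) (hd_zero : ∫ x, d x ∂ν = 0) :
    m * ∫ x in P, h x ∂ν ≤ ∫ x in P, d x ∂ν := by
  rw [← integral_const_mul]
  rcases le_total 0 δ with hδ | hδ
  · refine setIntegral_mono_on (hh.const_mul m).integrableOn hdi.integrableOn hP fun x hx => ?_
    have := h_pos x hx
    nlinarith [hm x, hg x, hd x]
  · have h_compl : ∫ x in Pᶜ, d x ∂ν ≤ ∫ x in Pᶜ, m * h x ∂ν := by
      refine setIntegral_mono_on hdi.integrableOn (hh.const_mul m).integrableOn hP.compl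
        fun x hx => ?_
      have := h_neg x hx
      nlinarith [hm x, hg x, hd x]
    rw [setIntegral_compl hP hdi, setIntegral_compl hP (hh.const_mul m), integral_const_mul,
      integral_const_mul, hh_zero, hd_zero] at h_compl
    rw [integral_const_mul]
    linarith

end Density

theorem class_separation_part1_general
    (Xh : Type*) [MeasurableSpace Xh]
    (ν : Measure Xh)
    (qy qy' b : Xh → ℝ)
    (hqy_nonneg : ∀ x, 0 ≤ qy x) (hqy'_nonneg : ∀ x, 0 ≤ qy' x)
    (hb_nonneg : ∀ x, 0 ≤ b x)
    (hqy_meas : Measurable qy) (hqy'_meas : Measurable qy')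
    (hqy_int : ∫ x, qy x ∂ν = 1) (hqy'_int : ∫ x, qy' x ∂ν = 1)
    (hb_int : ∫ x, b x ∂ν = 1)
    (lam : Xh → ℝ) (hlam_meas : Measurable lam)
    (hlam_bounds : ∀ x, 0 ≤ lam x ∧ lam x ≤ 1)
    (hlb : ∫ x, lam x * b x ∂ν < 1)
    (hly : ∫ x, lam x * qy x ∂ν < 1) (hly' : ∫ x, lam x * qy' x ∂ν < 1)
    (ηy ηy' : ℝ)
    (hηy : ηy = (1 - ∫ x, lam x * qy x ∂ν) / (1 - ∫ x, lam x * b x ∂ν))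
    (hηy' : ηy' = (1 - ∫ x, lam x * qy' x ∂ν) / (1 - ∫ x, lam x * b x ∂ν))
    (py py' : Xh → ℝ)
    (hpy : ∀ x, py x = lam x * qy x + ηy * (1 - lam x) * b x)
    (hpy' : ∀ x, py' x = lam x * qy' x + ηy' * (1 - lam x) * b x)
    (Dy Dy' Qy Qy' : Measure Xh)
    (hDy : Dy = ν.withDensity (fun x => ENNReal.ofReal (py x)))
    (hDy' : Dy' = ν.withDensity (fun x => ENNReal.ofReal (py' x)))
    (hDyprob : IsProbabilityMeasure Dy) (hDy'prob : IsProbabilityMeasure Dy')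
    (hQy : Qy = ν.withDensity (fun x => ENNReal.ofReal (qy x)))
    (hQy' : Qy' = ν.withDensity (fun x => ENNReal.ofReal (qy' x))) :
    (⨅ x : Xh, lam x) * dTV Qy Qy' ≤ dTV Dy Dy' := by
  subst hDy hDy' hQy hQy'
  have hqy_i : Integrable qy ν := .of_integral_ne_zero (by simp [hqy_int])
  have hqy'_i : Integrable qy' ν := .of_integral_ne_zero (by simp [hqy'_int])
  have hb_i : Integrable b ν := .of_integral_ne_zero (by simp [hb_int])
  have hq_diff : ∫ x, (qy x - qy' x) ∂ν = 0 := by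
    rw [integral_sub hqy_i hqy'_i, hqy_int, hqy'_int, sub_self]
  have hpy_i := integrable_of_eq_mixture hlam_bounds hpy hlam_meas hqy_i hb_i
  have hpy'_i := integrable_of_eq_mixture hlam_bounds hpy' hlam_meas hqy'_i hb_i
  have hη_nonneg {c : ℝ} (hc : c < 1) : 0 ≤ (1 - c) / (1 - ∫ x, lam x * b x ∂ν) :=
    div_nonneg (sub_nonneg.2 hc.le) (sub_nonneg.2 hlb.le)
  have hpy_nonneg := nonneg_of_eq_mixture hlam_bounds hpy hqy_nonneg hb_nonneg (hηy ▸ hη_nonneg hly)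
  have hpy'_nonneg :=
    nonneg_of_eq_mixture hlam_bounds hpy' hqy'_nonneg hb_nonneg (hηy' ▸ hη_nonneg hly')
  have hp_diff : ∫ x, (py x - py' x) ∂ν = 0 := by
    rw [← setIntegral_univ, ← toReal_withDensity_ofReal_sub hpy_i hpy'_i hpy_nonneg hpy'_nonneg
      .univ, measure_univ, measure_univ, sub_self]
  set P := {x | qy' x ≤ qy x}
  have hP : MeasurableSet P := measurableSet_le hqy'_meas hqy_meas
  have h_pos : ∀ x ∈ P, 0 ≤ qy x - qy' x := fun x hx => sub_nonneg.2 hx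
  have h_neg : ∀ x ∉ P, qy x - qy' x ≤ 0 := fun x hx => (sub_neg.2 (not_le.1 hx)).le
  have hQ := dTV_le_of_forall_abs_sub_le fun Γ hΓ => by
    rw [toReal_withDensity_ofReal_sub hqy_i hqy'_i hqy_nonneg hqy'_nonneg hΓ]
    exact abs_setIntegral_le_setIntegral_of_pos_neg hP h_pos h_neg (hqy_i.sub hqy'_i) hq_diff hΓ
  have hD := mul_setIntegral_le_setIntegral_of_pos_neg hP h_pos h_neg
    (fun x => ciInf_le ⟨0, fun _ ⟨y, hy⟩ => hy ▸ (hlam_bounds y).1⟩ x)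
    (fun x => mul_nonneg (sub_nonneg.2 (hlam_bounds x).2) (hb_nonneg x))
    (d := fun x => py x - py' x) (δ := ηy - ηy') (fun x => by rw [hpy, hpy']; ring)
    (hqy_i.sub hqy'_i) (hpy_i.sub hpy'_i) hq_diff hp_diff
  rw [← toReal_withDensity_ofReal_sub hpy_i hpy'_i hpy_nonneg hpy'_nonneg hP] at hD
  calc (⨅ x, lam x) * dTV _ _ ≤ (⨅ x, lam x) * ∫ x in P, (qy x - qy' x) ∂ν :=
        mul_le_mul_of_nonneg_left hQ (Real.iInf_nonneg fun x => (hlam_bounds x).1)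
    _ ≤ _ := hD.trans (le_abs_self _)
    _ ≤ _ := abs_sub_le_dTV hP

theorem class_separation_part1
    (Xh : Type*) [MeasurableSpace Xh] [Nonempty Xh]
    (ν : Measure Xh) [SigmaFinite ν]
    (qy qy' b : Xh → ℝ)
    (hqy_nonneg : ∀ x, 0 ≤ qy x) (hqy'_nonneg : ∀ x, 0 ≤ qy' x)
    (hb_nonneg : ∀ x, 0 ≤ b x)
    (hqy_meas : Measurable qy) (hqy'_meas : Measurable qy') (hb_meas : Measurable b)
    (hqy_int : ∫ x, qy x ∂ν = 1) (hqy'_int : ∫ x, qy' x ∂ν = 1)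
    (hb_int : ∫ x, b x ∂ν = 1)
    (lam : Xh → ℝ) (hlam_meas : Measurable lam)
    (hlam_bounds : ∀ x, 0 ≤ lam x ∧ lam x ≤ 1)
    (hlb : ∫ x, lam x * b x ∂ν < 1)
    (hly : ∫ x, lam x * qy x ∂ν < 1) (hly' : ∫ x, lam x * qy' x ∂ν < 1)
    (ηy ηy' : ℝ)
    (hηy : ηy = (1 - ∫ x, lam x * qy x ∂ν) / (1 - ∫ x, lam x * b x ∂ν))
    (hηy' : ηy' = (1 - ∫ x, lam x * qy' x ∂ν) / (1 - ∫ x, lam x * b x ∂ν))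
    (py py' : Xh → ℝ)
    (hpy : ∀ x, py x = lam x * qy x + ηy * (1 - lam x) * b x)
    (hpy' : ∀ x, py' x = lam x * qy' x + ηy' * (1 - lam x) * b x)
    (Dy Dy' Qy Qy' : Measure Xh)
    (hDy : Dy = ν.withDensity (fun x => ENNReal.ofReal (py x)))
    (hDy' : Dy' = ν.withDensity (fun x => ENNReal.ofReal (py' x)))
    (hDyprob : IsProbabilityMeasure Dy) (hDy'prob : IsProbabilityMeasure Dy')
    (hQy : Qy = ν.withDensity (fun x => ENNReal.ofReal (qy x)))
    (hQy' : Qy' = ν.withDensity (fun x => ENNReal.ofReal (qy' x))) :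
    (⨅ x : Xh, lam x) * dTV Qy Qy' ≤ dTV Dy Dy' :=
  class_separation_part1_general Xh ν qy qy' b hqy_nonneg hqy'_nonneg hb_nonneg hqy_meas hqy'_meas
    hqy_int hqy'_int hb_int lam hlam_meas hlam_bounds hlb hly hly' ηy ηy' hηy hηy' py py' hpy hpy'
    Dy Dy' Qy Qy' hDy hDy' hDyprob hDy'prob hQy hQy'
end

section
/- (Theorem on class separation, part 2.) Let (X̂, 𝒜) be a nonempty measurable space with a σ-finite measure ν. Let q_y, q_{y'}, b : X̂ → ℝ be nonnegative measurable probability densities with respect to ν (each integrating to 1), and let λ : X̂ → ℝ be measurable with 0 ≤ λ(x̂) ≤ 1 for all x̂, with ∫ λ·b dν < 1 and ∫ λ·q_y dν < 1 and ∫ λ·q_{y'} dν < 1. For each class c ∈ {y, y'}, set η_c = (1 - ∫ λ·q_c dν)/(1 - ∫ λ·b dν), define p_c(x̂) = λ(x̂)·q_c(x̂) + η_c·(1-λ(x̂))·b(x̂), and let D_c be the measure with density p_c with respect to ν. Assume moreover that q_y and q_{y'} have distinct supports, i.e. q_y(x̂)·q_{y'}(x̂) = 0 for ν-almost every x̂.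 Then d_TV(D_y, D_{y'}) ≥ min( ∫ λ·q_y dν , ∫ λ·q_{y'} dν ). -/
open MeasureTheory

theorem class_separation_part2
    (Xh : Type*) [MeasurableSpace Xh] [Nonempty Xh]
    (ν : Measure Xh) [SigmaFinite ν]
    (qy qy' b : Xh → ℝ)
    (hqy_nonneg : ∀ x, 0 ≤ qy x) (hqy'_nonneg : ∀ x, 0 ≤ qy' x)
    (hb_nonneg : ∀ x, 0 ≤ b x)
    (hqy_meas : Measurable qy) (hqy'_meas : Measurable qy') (hb_meas : Measurable b)
    (hqy_int : ∫ x, qy x ∂ν = 1) (hqy'_int : ∫ x, qy' x ∂ν = 1)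
    (hb_int : ∫ x, b x ∂ν = 1)
    (lam : Xh → ℝ) (hlam_meas : Measurable lam)
    (hlam_bounds : ∀ x, 0 ≤ lam x ∧ lam x ≤ 1)
    (hlb : ∫ x, lam x * b x ∂ν < 1)
    (hly : ∫ x, lam x * qy x ∂ν < 1) (hly' : ∫ x, lam x * qy' x ∂ν < 1)
    (ηy ηy' : ℝ)
    (hηy : ηy = (1 - ∫ x, lam x * qy x ∂ν) / (1 - ∫ x, lam x * b x ∂ν))
    (hηy' : ηy' = (1 - ∫ x, lam x * qy' x ∂ν) / (1 - ∫ x, lam x * b x ∂ν))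
    (py py' : Xh → ℝ)
    (hpy : ∀ x, py x = lam x * qy x + ηy * (1 - lam x) * b x)
    (hpy' : ∀ x, py' x = lam x * qy' x + ηy' * (1 - lam x) * b x)
    (Dy Dy' : Measure Xh)
    (hDy : Dy = ν.withDensity (fun x => ENNReal.ofReal (py x)))
    (hDy' : Dy' = ν.withDensity (fun x => ENNReal.ofReal (py' x)))
    (hdistinct : ∀ᵐ x ∂ν, qy x * qy' x = 0) :
    min (∫ x, lam x * qy x ∂ν) (∫ x, lam x * qy' x ∂ν) ≤ dTV Dy Dy' := by
  set Iy := ∫ x, lam x * qy x ∂ν with hIy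
  set Iy' := ∫ x, lam x * qy' x ∂ν with hIy'
  set Ib := ∫ x, lam x * b x ∂ν with hIbdef
  -- basic integrabilities
  have hqy_intble : Integrable qy ν := by
    by_contra h; rw [integral_undef h] at hqy_int; norm_num at hqy_int
  have hqy'_intble : Integrable qy' ν := by
    by_contra h; rw [integral_undef h] at hqy'_int; norm_num at hqy'_int
  have hb_intble : Integrable b ν := by
    by_contra h; rw [integral_undef h] at hb_int; norm_num at hb_int
  have hlqy_intble : Integrable (fun x => lam x * qy x) ν := by
    refine hqy_intble.mono ((hlam_meas.mul hqy_meas).aestronglyMeasurable) ?_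
    filter_upwards with x
    rw [Real.norm_eq_abs, Real.norm_eq_abs, abs_mul,
      abs_of_nonneg (hqy_nonneg x), abs_of_nonneg (hlam_bounds x).1]
    nlinarith [(hlam_bounds x).1, (hlam_bounds x).2, hqy_nonneg x]
  have hlqy'_intble : Integrable (fun x => lam x * qy' x) ν := by
    refine hqy'_intble.mono ((hlam_meas.mul hqy'_meas).aestronglyMeasurable) ?_
    filter_upwards with x
    rw [Real.norm_eq_abs, Real.norm_eq_abs, abs_mul,
      abs_of_nonneg (hqy'_nonneg x), abs_of_nonneg (hlam_bounds x).1]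
    nlinarith [(hlam_bounds x).1, (hlam_bounds x).2, hqy'_nonneg x]
  have hlb_intble : Integrable (fun x => (1 - lam x) * b x) ν := by
    refine hb_intble.mono (((measurable_const.sub hlam_meas).mul hb_meas).aestronglyMeasurable) ?_
    filter_upwards with x
    have h1 := (hlam_bounds x).1; have h2 := (hlam_bounds x).2
    rw [Real.norm_eq_abs, Real.norm_eq_abs, abs_mul, abs_of_nonneg (hb_nonneg x),
      abs_of_nonneg (by linarith : (0:ℝ) ≤ 1 - lam x)]
    nlinarith [hb_nonneg x]
  have hlamb_intble : Integrable (fun x => lam x * b x) ν := by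
    refine hb_intble.mono ((hlam_meas.mul hb_meas).aestronglyMeasurable) ?_
    filter_upwards with x
    rw [Real.norm_eq_abs, Real.norm_eq_abs, abs_mul,
      abs_of_nonneg (hb_nonneg x), abs_of_nonneg (hlam_bounds x).1]
    nlinarith [(hlam_bounds x).1, (hlam_bounds x).2, hb_nonneg x]
  -- nonneg of integrals, positivity of denominator
  have hIy_nonneg : 0 ≤ Iy :=
    integral_nonneg fun x => mul_nonneg (hlam_bounds x).1 (hqy_nonneg x)
  have hIy'_nonneg : 0 ≤ Iy' :=
    integral_nonneg fun x => mul_nonneg (hlam_bounds x).1 (hqy'_nonneg x)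
  have hdenom : (0:ℝ) < 1 - Ib := by linarith
  have hηy_nonneg : 0 ≤ ηy := hηy ▸ div_nonneg (by linarith) (by linarith)
  have hηy'_nonneg : 0 ≤ ηy' := hηy' ▸ div_nonneg (by linarith) (by linarith)
  -- rewrite densities into a convenient form
  have hpyfun : py = fun x => lam x * qy x + ηy * ((1 - lam x) * b x) := by
    funext x; rw [hpy x]; ring
  have hpy'fun : py' = fun x => lam x * qy' x + ηy' * ((1 - lam x) * b x) := by
    funext x; rw [hpy' x]; ring
  have hpy_nonneg : ∀ x, 0 ≤ py x := fun x => by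
    rw [hpyfun]
    have h1 := (hlam_bounds x).1; have h2 := (hlam_bounds x).2
    exact add_nonneg (mul_nonneg h1 (hqy_nonneg x))
      (mul_nonneg hηy_nonneg (mul_nonneg (by linarith) (hb_nonneg x)))
  have hpy'_nonneg : ∀ x, 0 ≤ py' x := fun x => by
    rw [hpy'fun]
    have h1 := (hlam_bounds x).1; have h2 := (hlam_bounds x).2
    exact add_nonneg (mul_nonneg h1 (hqy'_nonneg x))
      (mul_nonneg hηy'_nonneg (mul_nonneg (by linarith) (hb_nonneg x)))
  have hpy_intble : Integrable py ν := by
    rw [hpyfun]; exact hlqy_intble.add (hlb_intble.const_mul ηy)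
  have hpy'_intble : Integrable py' ν := by
    rw [hpy'fun]; exact hlqy'_intble.add (hlb_intble.const_mul ηy')
  have hpy_measble : Measurable py := by
    rw [hpyfun]
    exact (hlam_meas.mul hqy_meas).add
      (((measurable_const.sub hlam_meas).mul hb_meas).const_mul ηy)
  have hpy'_measble : Measurable py' := by
    rw [hpy'fun]
    exact (hlam_meas.mul hqy'_meas).add
      (((measurable_const.sub hlam_meas).mul hb_meas).const_mul ηy')
  -- the separating set
  set Γ : Set Xh := {x | 0 < qy x} with hΓdef
  have hΓ : MeasurableSet Γ := measurableSet_lt measurable_const hqy_meas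
  -- D c Γ in terms of set integrals
  have key : ∀ (p : Xh → ℝ), Measurable p → (∀ x, 0 ≤ p x) → Integrable p ν →
      ((ν.withDensity (fun x => ENNReal.ofReal (p x))) Γ).toReal = ∫ x in Γ, p x ∂ν := by
    intro p hm hnn hint
    rw [withDensity_apply _ hΓ,
      integral_eq_lintegral_of_nonneg_ae (Filter.Eventually.of_forall hnn)
        (hm.aestronglyMeasurable.restrict)]
  have hDyΓ : (Dy Γ).toReal = ∫ x in Γ, py x ∂ν := by
    rw [hDy]; exact key py hpy_measble hpy_nonneg hpy_intble
  have hDy'Γ : (Dy' Γ).toReal = ∫ x in Γ, py' x ∂ν := by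
    rw [hDy']; exact key py' hpy'_measble hpy'_nonneg hpy'_intble
  set B := ∫ x in Γ, (1 - lam x) * b x ∂ν with hBdef
  -- compute ∫ Γ py
  have hA : ∫ x in Γ, lam x * qy x ∂ν = Iy := by
    apply setIntegral_eq_integral_of_forall_compl_eq_zero
    intro x hx
    have : qy x = 0 := le_antisymm (not_lt.mp hx) (hqy_nonneg x)
    rw [this, mul_zero]
  have hA' : ∫ x in Γ, lam x * qy' x ∂ν = 0 := by
    apply integral_eq_zero_of_ae
    filter_upwards [ae_restrict_of_ae (μ := ν) (s := Γ) hdistinct,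
      ae_restrict_mem hΓ] with x hx hxΓ
    have hq : 0 < qy x := hxΓ
    have : qy' x = 0 := by
      rcases mul_eq_zero.mp hx with h | h
      · exact absurd h (ne_of_gt hq)
      · exact h
    simp [this]
  have hIntΓy : ∫ x in Γ, py x ∂ν = Iy + ηy * B := by
    rw [hpyfun, integral_add hlqy_intble.restrict ((hlb_intble.const_mul ηy).restrict),
      hA, integral_const_mul]
  have hIntΓy' : ∫ x in Γ, py' x ∂ν = ηy' * B := by
    rw [hpy'fun, integral_add hlqy'_intble.restrict ((hlb_intble.const_mul ηy').restrict),
      hA', integral_const_mul, zero_add]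
  -- bounds on B
  have hB0 : 0 ≤ B := setIntegral_nonneg hΓ fun x _ =>
    mul_nonneg (by linarith [(hlam_bounds x).2]) (hb_nonneg x)
  have hBtot : ∫ x, (1 - lam x) * b x ∂ν = 1 - Ib := by
    simp_rw [sub_mul, one_mul]
    rw [integral_sub hb_intble hlamb_intble, hb_int]
  have hB1 : B ≤ 1 - Ib := by
    rw [← hBtot]
    exact setIntegral_le_integral hlb_intble (Filter.Eventually.of_forall fun x =>
      mul_nonneg (by linarith [(hlam_bounds x).2]) (hb_nonneg x))
  -- the difference on Γ
  set t := B / (1 - Ib) with htdef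
  have ht0 : 0 ≤ t := div_nonneg hB0 hdenom.le
  have ht1 : t ≤ 1 := (div_le_one hdenom).mpr hB1
  have hdiff : (Dy Γ).toReal - (Dy' Γ).toReal = Iy + (Iy' - Iy) * t := by
    rw [hDyΓ, hDy'Γ, hIntΓy, hIntΓy', hηy, hηy', htdef]
    field_simp
    ring
  have hmin : min Iy Iy' ≤ (Dy Γ).toReal - (Dy' Γ).toReal := by
    rw [hdiff]
    rcases le_total Iy Iy' with h | h
    · rw [min_eq_left h]; nlinarith
    · rw [min_eq_right h]; nlinarith
  -- finiteness of the measures, for BddAbove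
  have hfinDy : IsFiniteMeasure Dy := by
    rw [hDy]; exact isFiniteMeasure_withDensity_ofReal hpy_intble.hasFiniteIntegral
  have hfinDy' : IsFiniteMeasure Dy' := by
    rw [hDy']; exact isFiniteMeasure_withDensity_ofReal hpy'_intble.hasFiniteIntegral
  have hbdd : BddAbove {r | ∃ Γ : Set Xh, MeasurableSet Γ ∧
      r = |(Dy Γ).toReal - (Dy' Γ).toReal|} := by
    refine ⟨(Dy Set.univ).toReal + (Dy' Set.univ).toReal, ?_⟩
    rintro r ⟨Γ', _, rfl⟩
    calc |(Dy Γ').toReal - (Dy' Γ').toReal|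
        ≤ |(Dy Γ').toReal| + |(Dy' Γ').toReal| := abs_sub _ _
      _ = (Dy Γ').toReal + (Dy' Γ').toReal := by
          rw [abs_of_nonneg ENNReal.toReal_nonneg, abs_of_nonneg ENNReal.toReal_nonneg]
      _ ≤ (Dy Set.univ).toReal + (Dy' Set.univ).toReal := by
          gcongr
          · exact measure_ne_top Dy _
          · exact Set.subset_univ _
          · exact measure_ne_top Dy' _
          · exact Set.subset_univ _
  have hmem : |(Dy Γ).toReal - (Dy' Γ).toReal| ∈ {r | ∃ Γ : Set Xh, MeasurableSet Γ ∧
      r = |(Dy Γ).toReal - (Dy' Γ).toReal|} := ⟨Γ, hΓ, rfl⟩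
  calc min Iy Iy' ≤ (Dy Γ).toReal - (Dy' Γ).toReal := hmin
    _ ≤ |(Dy Γ).toReal - (Dy' Γ).toReal| := le_abs_self _
    _ ≤ dTV Dy Dy' := le_csSup hbdd hmem
end
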